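/- Let P and Q be finite point sets in general position in ℝ² and γ: P → Q a bijection preserving orientations of all ordered triples. Then for any four points a,b,c,d ∈ P, the segments ab and cd are disjoint if and only if the segments γ(a)γ(b) and γ(c)γ(d) are disjoint. -/

import Mathlib

noncomputable section

/-- Points of the plane. -/
abbrev Pl := ℝ × ℝ

/-- `P` is in general position: no three (distinct) points of `P` are collinear. -/
def GenPos (P : Set Pl) : Prop :=
  ∀ a ∈ P, ∀ b ∈ P, ∀ c ∈ P, a ≠ b → a ≠ c → b ≠ c →
    ¬ Collinear ℝ ({a, b, c} : Set Pl)

/-- The set of all closed straight-line segments with (distinct) endpoints in `P`. -/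
def Segs (P : Set Pl) : Set (Set Pl) :=
  {s | ∃ a ∈ P, ∃ b ∈ P, a ≠ b ∧ s = segment ℝ a b}

/-- The edge disjointness graph of `P`: vertices are the segments of `P`,
two of them adjacent iff they are disjoint. -/
def DisjGraph (P : Set Pl) : SimpleGraph ↥(Segs P) where
  Adj s t := Disjoint (s : Set Pl) (t : Set Pl)
  symm := ⟨fun _ _ h => Disjoint.symm h⟩
  loopless := ⟨by
    rintro ⟨s, a, ha, b, hb, hab, rfl⟩ h
    exact (Set.not_disjoint_iff.2
      ⟨a, left_mem_segment ℝ a b, left_mem_segment ℝ a b⟩) h⟩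

/-- An independent set of vertices: pairwise non-adjacent. -/
def IsIndepSet {V : Type*} (G : SimpleGraph V) (s : Set V) : Prop :=
  s.Pairwise fun a b => ¬ G.Adj a b

/-- Twice the signed area of the triangle `a b c`; its sign is the orientation. -/
def det3 (a b c : Pl) : ℝ :=
  (b.1 - a.1) * (c.2 - a.2) - (b.2 - a.2) * (c.1 - a.1)

/-- `p 0, …, p (n-1)` are in convex position, appearing in this
(counterclockwise) cyclic order on their convex hull. -/
def ConvexCyclic {n : ℕ} (p : Fin n → Pl) : Prop :=
  ∀ i j k : Fin n, i < j → j < k → 0 < det3 (p i) (p j) (p k)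

/-- `P` is in convex position: every point of `P` is a vertex of the convex hull. -/
def ConvexPos (P : Set Pl) : Prop :=
  ∀ x ∈ P, x ∉ convexHull ℝ (P \ {x})

/-- `P` and `Q` have the same order type. -/
def SameOrderType (P Q : Set Pl) : Prop :=
  ∃ γ : Pl → Pl, Set.BijOn γ P Q ∧
    ∀ a ∈ P, ∀ b ∈ P, ∀ c ∈ P,
      Real.sign (det3 a b c) = Real.sign (det3 (γ a) (γ b) (γ c))

/-- A thrackle of `P`: a set of segments of `P`, any two of which intersect. -/
def IsThrackle (P : Set Pl) (T : Set (Set Pl)) : Prop :=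
  T ⊆ Segs P ∧ ∀ s ∈ T, ∀ t ∈ T, s ≠ t → ¬ Disjoint s t

end

/-! Segments `ab` and `cd` without common endpoints, no three of whose endpoints are collinear,
meet iff `c, d` lie strictly on opposite sides of line `ab` and `a, b` strictly on opposite sides
of line `cd`, i.e. iff `det3 a b c * det3 a b d < 0` and `det3 c d a * det3 c d b < 0`; the common
point is where line `ab` meets line `cd`. This criterion only involves orientations, so it is
transported by an orientation-preserving map, while segments with a common endpoint meet on both
sides. -/

namespace Real

theorem sign_eq_one_iff {r : ℝ} : sign r = 1 ↔ 0 < r := by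
  refine ⟨fun h => ?_, sign_of_pos⟩
  rcases lt_trichotomy r 0 with hr | rfl | hr
  · rw [sign_of_neg hr] at h
    norm_num at h
  · simp at h
  · exact hr

theorem sign_eq_neg_one_iff {r : ℝ} : sign r = -1 ↔ r < 0 := by
  rw [← neg_pos, ← sign_eq_one_iff, sign_neg, neg_eq_iff_eq_neg]

theorem mul_neg_iff_of_sign_eq {x y x' y' : ℝ} (hx : sign x = sign x') (hy : sign y = sign y') :
    x * y < 0 ↔ x' * y' < 0 := by
  simp only [mul_neg_iff, ← sign_eq_one_iff, ← sign_eq_neg_one_iff, hx, hy]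

end Real

theorem not_disjoint_segment_of_endpoint_eq {𝕜 E : Type*} [Semiring 𝕜] [PartialOrder 𝕜]
    [ZeroLEOneClass 𝕜] [AddCommMonoid E] [Module 𝕜 E] {a b c d : E}
    (h : a = c ∨ a = d ∨ b = c ∨ b = d) : ¬Disjoint (segment 𝕜 a b) (segment 𝕜 c d) := by
  rw [Set.not_disjoint_iff]
  rcases h with rfl | rfl | rfl | rfl
  exacts [⟨a, left_mem_segment 𝕜 a b, left_mem_segment 𝕜 a d⟩,
    ⟨a, left_mem_segment 𝕜 a b, right_mem_segment 𝕜 c a⟩,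
    ⟨b, right_mem_segment 𝕜 a b, left_mem_segment 𝕜 b d⟩,
    ⟨b, right_mem_segment 𝕜 a b, right_mem_segment 𝕜 c b⟩]

theorem inv_sub_smul_sub_mem_segment {E : Type*} [AddCommGroup E] [Module ℝ E] {p q : ℝ}
    (hpq : p * q < 0) (x y : E) : (q - p)⁻¹ • (q • x - p • y) ∈ segment ℝ x y := by
  have hqp : q - p ≠ 0 := by
    intro h
    obtain rfl := sub_eq_zero.1 h
    nlinarith [mul_self_nonneg q]
  refine ⟨q / (q - p), -p / (q - p), ?_, ?_, by field_simp; ring, by module⟩ <;>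
    rcases mul_neg_iff.1 hpq with ⟨hp, hq⟩ | ⟨hp, hq⟩
  · exact div_nonneg_of_nonpos hq.le (by linarith)
  · exact div_nonneg hq.le (by linarith)
  · exact div_nonneg_of_nonpos (by linarith) (by linarith)
  · exact div_nonneg (by linarith) (by linarith)

theorem det3_add_smul {a b c d : Pl} {u v : ℝ} (huv : u + v = 1) :
    det3 a b (u • c + v • d) = u * det3 a b c + v * det3 a b d := by
  obtain rfl : u = 1 - v := by linarith
  simp only [det3, Prod.fst_add, Prod.snd_add, Prod.smul_fst, Prod.smul_snd, smul_eq_mul]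
  ring

theorem det3_eq_zero_of_mem_segment {a b x : Pl} (hx : x ∈ segment ℝ a b) : det3 a b x = 0 := by
  obtain ⟨u, v, -, -, huv, rfl⟩ := hx
  rw [det3_add_smul huv]
  simp only [det3]
  ring

theorem collinear_of_det3_eq_zero {a b c : Pl} (h : det3 a b c = 0) :
    Collinear ℝ ({a, b, c} : Set Pl) := by
  rcases eq_or_ne a b with rfl | hab
  · simpa using collinear_pair ℝ a c
  have hn : (b.1 - a.1) ^ 2 + (b.2 - a.2) ^ 2 ≠ 0 := by
    intro h0
    exact hab (Prod.ext (by nlinarith) (by nlinarith))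
  rw [Set.pair_comm, Set.insert_comm]
  apply collinear_insert_of_mem_affineSpan_pair
  -- `c - a` is the multiple `⟪c - a, b - a⟫ / ‖b - a‖²` of `b - a`.
  convert AffineMap.lineMap_mem_affineSpan_pair
    (((c.1 - a.1) * (b.1 - a.1) + (c.2 - a.2) * (b.2 - a.2)) / ((b.1 - a.1) ^ 2 + (b.2 - a.2) ^ 2))
    a b using 1
  rw [AffineMap.lineMap_apply_module']
  simp only [det3] at h
  ext <;> simp only [Prod.fst_add, Prod.snd_add, Prod.smul_fst, Prod.smul_snd, Prod.fst_sub,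
    Prod.snd_sub, smul_eq_mul] <;> field_simp
  · linear_combination (a.2 - b.2) * h
  · linear_combination (b.1 - a.1) * h

theorem det3_mul_neg_of_mem_segment {a b c d x : Pl} (hx : x ∈ segment ℝ c d)
    (hxab : det3 a b x = 0) (hc : det3 a b c ≠ 0) (hd : det3 a b d ≠ 0) :
    det3 a b c * det3 a b d < 0 := by
  obtain ⟨u, v, hu, hv, huv, rfl⟩ := hx
  rw [det3_add_smul huv] at hxab
  by_contra! h
  have hsum : u * det3 a b c ^ 2 + v * det3 a b d ^ 2 + det3 a b c * det3 a b d = 0 := by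
    linear_combination (det3 a b c + det3 a b d) * hxab - det3 a b c * det3 a b d * huv
  have hu_sq := mul_nonneg hu (sq_nonneg (det3 a b c))
  have hv_sq := mul_nonneg hv (sq_nonneg (det3 a b d))
  have hu0 : u = 0 :=
    (mul_eq_zero.1 (by linarith : u * det3 a b c ^ 2 = 0)).resolve_right (pow_ne_zero 2 hc)
  have hv0 : v = 0 :=
    (mul_eq_zero.1 (by linarith : v * det3 a b d ^ 2 = 0)).resolve_right (pow_ne_zero 2 hd)
  linarith

-- The point of line `ab` where the affine function `det3 c d` vanishes.
noncomputable def lineInter (a b c d : Pl) : Pl :=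
  (det3 c d b - det3 c d a)⁻¹ • (det3 c d b • a - det3 c d a • b)

theorem lineInter_comm (a b c d : Pl) : lineInter c d a b = lineInter a b c d := by
  have hden : det3 a b d - det3 a b c = -(det3 c d b - det3 c d a) := by
    simp only [det3]
    ring
  have hnum : det3 a b d • c - det3 a b c • d = -(det3 c d b • a - det3 c d a • b) := by
    ext <;> simp only [det3, Prod.fst_sub, Prod.snd_sub, Prod.smul_fst, Prod.smul_snd,
      Prod.fst_neg, Prod.snd_neg, smul_eq_mul] <;> ring
  rw [lineInter, lineInter, hden, hnum, inv_neg, neg_smul_neg]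

theorem lineInter_mem_segment {a b c d : Pl} (h : det3 c d a * det3 c d b < 0) :
    lineInter a b c d ∈ segment ℝ a b :=
  inv_sub_smul_sub_mem_segment h a b

theorem not_disjoint_segment_iff {a b c d : Pl} (h₁ : det3 a b c ≠ 0) (h₂ : det3 a b d ≠ 0)
    (h₃ : det3 c d a ≠ 0) (h₄ : det3 c d b ≠ 0) :
    ¬Disjoint (segment ℝ a b) (segment ℝ c d) ↔
      det3 a b c * det3 a b d < 0 ∧ det3 c d a * det3 c d b < 0 := by
  rw [Set.not_disjoint_iff]
  constructor
  · rintro ⟨x, hab, hcd⟩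
    exact ⟨det3_mul_neg_of_mem_segment hcd (det3_eq_zero_of_mem_segment hab) h₁ h₂,
      det3_mul_neg_of_mem_segment hab (det3_eq_zero_of_mem_segment hcd) h₃ h₄⟩
  · rintro ⟨hab, hcd⟩
    exact ⟨lineInter a b c d, lineInter_mem_segment hcd,
      lineInter_comm a b c d ▸ lineInter_mem_segment hab⟩

theorem not_disjoint_segment_iff_of_sign_det3_eq {a b c d a' b' c' d' : Pl}
    (h₁ : det3 a b c ≠ 0) (h₂ : det3 a b d ≠ 0) (h₃ : det3 c d a ≠ 0) (h₄ : det3 c d b ≠ 0)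
    (s₁ : Real.sign (det3 a b c) = Real.sign (det3 a' b' c'))
    (s₂ : Real.sign (det3 a b d) = Real.sign (det3 a' b' d'))
    (s₃ : Real.sign (det3 c d a) = Real.sign (det3 c' d' a'))
    (s₄ : Real.sign (det3 c d b) = Real.sign (det3 c' d' b')) :
    ¬Disjoint (segment ℝ a b) (segment ℝ c d) ↔ ¬Disjoint (segment ℝ a' b') (segment ℝ c' d') := by
  have ne_zero {x y : ℝ} (s : Real.sign x = Real.sign y) (hx : x ≠ 0) : y ≠ 0 := by
    rwa [Ne, ← Real.sign_eq_zero_iff, ← s, Real.sign_eq_zero_iff]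
  rw [not_disjoint_segment_iff h₁ h₂ h₃ h₄,
    not_disjoint_segment_iff (ne_zero s₁ h₁) (ne_zero s₂ h₂) (ne_zero s₃ h₃) (ne_zero s₄ h₄),
    Real.mul_neg_iff_of_sign_eq s₁ s₂, Real.mul_neg_iff_of_sign_eq s₃ s₄]

theorem stmt_8_general (P : Set Pl)
    (hgP : GenPos P) (γ : Pl → Pl)
    (hpres : ∀ a ∈ P, ∀ b ∈ P, ∀ c ∈ P,
      Real.sign (det3 a b c) = Real.sign (det3 (γ a) (γ b) (γ c)))
    (a b c d : Pl) (ha : a ∈ P) (hb : b ∈ P) (hc : c ∈ P) (hd : d ∈ P)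
    (hab : a ≠ b) (hcd : c ≠ d) :
    Disjoint (segment ℝ a b) (segment ℝ c d) ↔
      Disjoint (segment ℝ (γ a) (γ b)) (segment ℝ (γ c) (γ d)) := by
  by_cases hshared : a = c ∨ a = d ∨ b = c ∨ b = d
  · refine iff_of_false (not_disjoint_segment_of_endpoint_eq hshared)
      (not_disjoint_segment_of_endpoint_eq ?_)
    rcases hshared with rfl | rfl | rfl | rfl <;> simp
  push Not at hshared
  obtain ⟨hac, had, hbc, hbd⟩ := hshared
  have det3_ne_zero {x y z : Pl} (hx : x ∈ P) (hy : y ∈ P) (hz : z ∈ P) (hxy : x ≠ y)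
      (hxz : x ≠ z) (hyz : y ≠ z) : det3 x y z ≠ 0 :=
    mt collinear_of_det3_eq_zero (hgP x hx y hy z hz hxy hxz hyz)
  rw [← not_iff_not]
  exact not_disjoint_segment_iff_of_sign_det3_eq
    (det3_ne_zero ha hb hc hab hac hbc) (det3_ne_zero ha hb hd hab had hbd)
    (det3_ne_zero hc hd ha hcd hac.symm had.symm) (det3_ne_zero hc hd hb hcd hbc.symm hbd.symm)
    (hpres a ha b hb c hc) (hpres a ha b hb d hd) (hpres c hc d hd a ha) (hpres c hc d hd b hb)

/-- an orientation-preserving bijection preserves disjointness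
of segments. -/
theorem stmt_8 (P Q : Set Pl) (hPfin : P.Finite) (hQfin : Q.Finite)
    (hgP : GenPos P) (hgQ : GenPos Q) (γ : Pl → Pl)
    (hbij : Set.BijOn γ P Q)
    (hpres : ∀ a ∈ P, ∀ b ∈ P, ∀ c ∈ P,
      Real.sign (det3 a b c) = Real.sign (det3 (γ a) (γ b) (γ c)))
    (a b c d : Pl) (ha : a ∈ P) (hb : b ∈ P) (hc : c ∈ P) (hd : d ∈ P)
    (hab : a ≠ b) (hcd : c ≠ d) :
    Disjoint (segment ℝ a b) (segment ℝ c d) ↔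
      Disjoint (segment ℝ (γ a) (γ b)) (segment ℝ (γ c) (γ d)) :=
  stmt_8_general P hgP γ hpres a b c d ha hb hc hd hab hcd
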